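/- Let r1, r2, a1, a2, b1, b2 be positive real numbers with a1·a2 - b1·b2 > 0 and b1/a2 < r1/r2 < a1/b2, let u*, v* be the (positive) coexistence state, let d > 0, d12 ≥ 0, and set α = (2·b2·u* - r2)·v*. If α ≤ 0, then for every λ ≥ 0, det(J* - λ·J_Δ*) > 0; i.e., the homogeneous coexistence state cannot be destabilized by the cross-diffusion mechanism when α ≤ 0. -/

import Mathlib

/-!
Expanding the determinant gives a quadratic in `λ`,
`det (J* - λ J_Δ*) = (a1 a2 - b1 b2) u* v* + λ (d (a1 u* + a2 v*) - d12 α) + λ² d (d + d12 v*)`,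
where `α = (b2 u* - a2 v*) v*` because `b2 u* + a2 v* = r2`. Its constant term is positive and,
when `α ≤ 0`, its other two coefficients are nonnegative.
-/

section CoexistenceState

variable {r1 r2 a1 a2 b1 b2 : ℝ}

theorem coexistence_numerator_u_pos (ha2 : 0 < a2) (hr2 : 0 < r2) (hlow : b1 / a2 < r1 / r2) :
    0 < r1 * a2 - r2 * b1 := by
  rw [div_lt_div_iff₀ ha2 hr2] at hlow
  linarith

theorem coexistence_numerator_v_pos (hr2 : 0 < r2) (hb2 : 0 < b2) (hhigh : r1 / r2 < a1 / b2) :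
    0 < r2 * a1 - r1 * b2 := by
  rw [div_lt_div_iff₀ hr2 hb2] at hhigh
  linarith

theorem coexistence_second_equation (hD : a1 * a2 - b1 * b2 ≠ 0) :
    b2 * ((r1 * a2 - r2 * b1) / (a1 * a2 - b1 * b2))
      + a2 * ((r2 * a1 - r1 * b2) / (a1 * a2 - b1 * b2)) = r2 := by
  rw [mul_div_assoc', mul_div_assoc', ← add_div, div_eq_iff hD]
  ring

end CoexistenceState

section CharacteristicDeterminant

variable (a1 a2 b1 b2 u v d d12 lam : ℝ)

theorem det_characteristic_matrix :
    (!![-(a1 * u), -(b1 * u); -(b2 * v), -(a2 * v)] - lam • !![d + d12 * v, d12 * u; 0, d]).det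
      = (a1 * a2 - b1 * b2) * u * v
        + lam * (d * (a1 * u + a2 * v) + d12 * v * (a2 * v - b2 * u))
        + lam ^ 2 * (d * (d + d12 * v)) := by
  simp only [Matrix.det_fin_two_of, Matrix.smul_of, Matrix.smul_cons, Matrix.smul_empty,
    smul_eq_mul, Matrix.of_sub_of, Matrix.cons_sub_cons, Matrix.empty_sub_empty]
  ring

variable {a1 a2 b1 b2 u v d d12 lam}

theorem det_characteristic_matrix_pos (hD : 0 < a1 * a2 - b1 * b2) (hu : 0 < u) (hv : 0 < v)
    (ha1 : 0 < a1) (ha2 : 0 < a2) (hd : 0 ≤ d) (hd12 : 0 ≤ d12) (hbal : b2 * u ≤ a2 * v)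
    (hlam : 0 ≤ lam) :
    0 < (!![-(a1 * u), -(b1 * u); -(b2 * v), -(a2 * v)]
      - lam • !![d + d12 * v, d12 * u; 0, d]).det := by
  rw [det_characteristic_matrix]
  have hbal' : 0 ≤ a2 * v - b2 * u := sub_nonneg.mpr hbal
  positivity

end CharacteristicDeterminant

theorem skt_no_turing_for_nonpositive_alpha_general
    (r1 r2 a1 a2 b1 b2 : ℝ)
    (hr2 : 0 < r2) (ha1 : 0 < a1) (ha2 : 0 < a2)
    (hb2 : 0 < b2)
    (hweak : a1 * a2 - b1 * b2 > 0)
    (hlow : b1 / a2 < r1 / r2) (hhigh : r1 / r2 < a1 / b2)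
    (ustar vstar : ℝ)
    (hu : ustar = (r1 * a2 - r2 * b1) / (a1 * a2 - b1 * b2))
    (hv : vstar = (r2 * a1 - r1 * b2) / (a1 * a2 - b1 * b2))
    (d d12 : ℝ) (hd : 0 < d) (hd12 : 0 ≤ d12)
    (α : ℝ) (hα : α = (2 * b2 * ustar - r2) * vstar) (hαle : α ≤ 0)
    (J JΔ : Matrix (Fin 2) (Fin 2) ℝ)
    (hJ : J = !![-(a1 * ustar), -(b1 * ustar); -(b2 * vstar), -(a2 * vstar)])
    (hJΔ : JΔ = !![d + d12 * vstar, d12 * ustar; 0, d]) :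
    ∀ lam : ℝ, 0 ≤ lam → 0 < Matrix.det (J - lam • JΔ) := by
  intro lam hlam
  have hu0 : 0 < ustar := hu ▸ div_pos (coexistence_numerator_u_pos ha2 hr2 hlow) hweak
  have hv0 : 0 < vstar := hv ▸ div_pos (coexistence_numerator_v_pos hr2 hb2 hhigh) hweak
  have hr2_eq : b2 * ustar + a2 * vstar = r2 := hu ▸ hv ▸ coexistence_second_equation hweak.ne'
  have hα_eq : α = (b2 * ustar - a2 * vstar) * vstar := by rw [hα, ← hr2_eq]; ring
  have hbal : b2 * ustar ≤ a2 * vstar :=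
    sub_nonpos.mp (nonpos_of_mul_nonpos_left (hα_eq ▸ hαle) hv0)
  subst hJ hJΔ
  exact det_characteristic_matrix_pos hweak hu0 hv0 ha1 ha2 hd.le hd12 hbal hlam

/-- If `α = (2 b2 u* - r2) v* ≤ 0`, the determinant of the characteristic matrix is
positive for all `λ ≥ 0`: the homogeneous coexistence state cannot be destabilized
by the cross-diffusion mechanism. -/
theorem skt_no_turing_for_nonpositive_alpha
    (r1 r2 a1 a2 b1 b2 : ℝ)
    (hr1 : 0 < r1) (hr2 : 0 < r2) (ha1 : 0 < a1) (ha2 : 0 < a2)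
    (hb1 : 0 < b1) (hb2 : 0 < b2)
    (hweak : a1 * a2 - b1 * b2 > 0)
    (hlow : b1 / a2 < r1 / r2) (hhigh : r1 / r2 < a1 / b2)
    (ustar vstar : ℝ)
    (hu : ustar = (r1 * a2 - r2 * b1) / (a1 * a2 - b1 * b2))
    (hv : vstar = (r2 * a1 - r1 * b2) / (a1 * a2 - b1 * b2))
    (d d12 : ℝ) (hd : 0 < d) (hd12 : 0 ≤ d12)
    (α : ℝ) (hα : α = (2 * b2 * ustar - r2) * vstar) (hαle : α ≤ 0)
    (J JΔ : Matrix (Fin 2) (Fin 2) ℝ)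
    (hJ : J = !![-(a1 * ustar), -(b1 * ustar); -(b2 * vstar), -(a2 * vstar)])
    (hJΔ : JΔ = !![d + d12 * vstar, d12 * ustar; 0, d]) :
    ∀ lam : ℝ, 0 ≤ lam → 0 < Matrix.det (J - lam • JΔ) :=
  skt_no_turing_for_nonpositive_alpha_general r1 r2 a1 a2 b1 b2 hr2 ha1 ha2 hb2 hweak hlow hhigh
    ustar vstar hu hv d d12 hd hd12 α hα hαle J JΔ hJ hJΔ
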